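/- Assume λ_s(w) ≠ 0 at all arguments appearing below and that for all z ∈ ℂ the constraint λ_0(z) λ_0(z + c/2) = ∏_{s=1}^{n} λ_s(z_{s−1})/λ_s(z_s) holds. Then for every ℓ ∈ {0, 1, …, n} and every z ∈ ℂ: λ_n(z) · ∏_{s=0}^{n−1} α_s(z) · ∏_{s=0}^{ℓ−1} α_s(z_s) = λ_{−ℓ}(z), where λ_{−ℓ}(z) = (1/λ_ℓ(z_ℓ)) ∏_{s=ℓ+1}^{n} λ_s(z_{s−1})/λ_s(z_s). -/

import Mathlib

/-!
The product `λ_n(z) ∏_{s<n} α_s(z)` telescopes to `λ_0(z)`, and the constraint says exactly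
`λ_{−0} = λ_0`. Peeling the factor `s = ℓ + 1` off the product defining `λ_{−ℓ}` gives
`λ_{−(ℓ+1)}(z) = λ_{−ℓ}(z) α_ℓ(z_ℓ)`, so the claim follows by induction on `ℓ`.
-/

noncomputable section

/-- The shifted point `z_k = z − c(k − 1/2)` (with `k` a complex parameter, so
that `z_{s−1}` can be written as `zpt c z (s − 1)`). -/
def zpt (c z k : ℂ) : ℂ := z - c * (k - 1 / 2)

open Finset

lemma mul_prod_range_div_succ {K : Type*} [Field K] (f : ℕ → K) {n : ℕ}
    (hf : ∀ s ≤ n, f s ≠ 0) :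
    f n * ∏ s ∈ range n, f s / f (s + 1) = f 0 := by
  induction n with
  | zero => simp
  | succ n ih =>
    rw [prod_range_succ, ← ih fun s hs => hf s (hs.trans n.le_succ)]
    field_simp [hf _ le_rfl]

lemma prod_Icc_eq_mul_prod_Icc_succ {M : Type*} [CommMonoid M] (f : ℕ → M) {a b : ℕ}
    (h : a ≤ b) : ∏ s ∈ Icc a b, f s = f a * ∏ s ∈ Icc (a + 1) b, f s := by
  rw [Icc_eq_cons_Ioc h, prod_cons, Icc_add_one_left_eq_Ioc]

/-- The paper's `λ_{−ℓ}(z)`. -/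
def lamNeg (n : ℕ) (c : ℂ) (lam : ℕ → ℂ → ℂ) (ℓ : ℕ) (z : ℂ) : ℂ :=
  (lam ℓ (zpt c z ℓ))⁻¹ *
    ∏ s ∈ Icc (ℓ + 1) n, lam s (zpt c z ((s : ℂ) - 1)) / lam s (zpt c z s)

lemma lamNeg_zero {n : ℕ} {c : ℂ} {lam : ℕ → ℂ → ℂ} {z : ℂ}
    (hconstraint : lam 0 z * lam 0 (z + c / 2) =
      ∏ s ∈ Icc 1 n, lam s (zpt c z ((s : ℂ) - 1)) / lam s (zpt c z s))
    (hne : lam 0 (z + c / 2) ≠ 0) :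
    lamNeg n c lam 0 z = lam 0 z := by
  have hz₀ : zpt c z ((0 : ℕ) : ℂ) = z + c / 2 := by simp only [zpt]; push_cast; ring
  rw [lamNeg, hz₀, zero_add, ← hconstraint, mul_comm (lam 0 z), inv_mul_cancel_left₀ hne]

lemma lamNeg_succ {n : ℕ} {c : ℂ} {lam : ℕ → ℂ → ℂ} {ℓ : ℕ} {z : ℂ} (hℓ : ℓ + 1 ≤ n)
    (hA : lam ℓ (zpt c z ℓ) ≠ 0) (hB : lam (ℓ + 1) (zpt c z ℓ) ≠ 0) :
    lamNeg n c lam (ℓ + 1) z =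
      lamNeg n c lam ℓ z * (lam ℓ (zpt c z ℓ) / lam (ℓ + 1) (zpt c z ℓ)) := by
  have hz : zpt c z (((ℓ + 1 : ℕ) : ℂ) - 1) = zpt c z ℓ := by push_cast; ring_nf
  rw [lamNeg, lamNeg, prod_Icc_eq_mul_prod_Icc_succ _ hℓ, hz]
  field_simp

lemma lam_zero_mul_prod_eq_lamNeg {n : ℕ} {c : ℂ} {lam : ℕ → ℂ → ℂ}
    (hne : ∀ s ≤ n, ∀ w, lam s w ≠ 0)
    (hconstraint : ∀ z, lam 0 z * lam 0 (z + c / 2) =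
      ∏ s ∈ Icc 1 n, lam s (zpt c z ((s : ℂ) - 1)) / lam s (zpt c z s))
    {ℓ : ℕ} (hℓ : ℓ ≤ n) (z : ℂ) :
    lam 0 z * ∏ s ∈ range ℓ, lam s (zpt c z s) / lam (s + 1) (zpt c z s) =
      lamNeg n c lam ℓ z := by
  induction ℓ with
  | zero => rw [prod_range_zero, mul_one, lamNeg_zero (hconstraint z) (hne 0 hℓ _)]
  | succ ℓ ih =>
    rw [prod_range_succ, ← mul_assoc, ih (by omega),
      lamNeg_succ hℓ (hne ℓ (by omega) _) (hne (ℓ + 1) hℓ _)]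

theorem statement10_general (n : ℕ) (c : ℂ)
    (lam : ℕ → ℂ → ℂ)
    (hne : ∀ s : ℕ, s ≤ n → ∀ w : ℂ, lam s w ≠ 0)
    (hconstraint : ∀ z : ℂ,
      lam 0 z * lam 0 (z + c / 2) =
        ∏ s ∈ Finset.Icc 1 n, lam s (zpt c z ((s : ℂ) - 1)) / lam s (zpt c z s))
    (ℓ : ℕ) (hℓ : ℓ ≤ n) (z : ℂ) :
    lam n z * (∏ s ∈ Finset.range n, lam s z / lam (s + 1) z) *
        ∏ s ∈ Finset.range ℓ, lam s (zpt c z s) / lam (s + 1) (zpt c z s) =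
      (lam ℓ (zpt c z ℓ))⁻¹ *
        ∏ s ∈ Finset.Icc (ℓ + 1) n, lam s (zpt c z ((s : ℂ) - 1)) / lam s (zpt c z s) := by
  rw [mul_prod_range_div_succ (lam · z) fun s hs => hne s hs z]
  exact lam_zero_mul_prod_eq_lamNeg hne hconstraint hℓ z

/-- assume the `λ`'s never vanish and satisfy the constraint
`λ_0(z) λ_0(z + c/2) = ∏_{s=1}^{n} λ_s(z_{s−1})/λ_s(z_s)` for all `z`.
Then for `0 ≤ ℓ ≤ n` and any `z`:
`λ_n(z) ∏_{s=0}^{n−1} α_s(z) ∏_{s=0}^{ℓ−1} α_s(z_s) = λ_{−ℓ}(z)`, where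
`α_s(z) = λ_s(z)/λ_{s+1}(z)` and
`λ_{−ℓ}(z) = (1/λ_ℓ(z_ℓ)) ∏_{s=ℓ+1}^{n} λ_s(z_{s−1})/λ_s(z_s)`. -/
theorem statement10 (n : ℕ) (hn : 1 ≤ n) (c : ℂ) (hc : c ≠ 0)
    (lam : ℕ → ℂ → ℂ)
    (hne : ∀ s : ℕ, s ≤ n → ∀ w : ℂ, lam s w ≠ 0)
    (hconstraint : ∀ z : ℂ,
      lam 0 z * lam 0 (z + c / 2) =
        ∏ s ∈ Finset.Icc 1 n, lam s (zpt c z ((s : ℂ) - 1)) / lam s (zpt c z s))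
    (ℓ : ℕ) (hℓ : ℓ ≤ n) (z : ℂ) :
    lam n z * (∏ s ∈ Finset.range n, lam s z / lam (s + 1) z) *
        ∏ s ∈ Finset.range ℓ, lam s (zpt c z s) / lam (s + 1) (zpt c z s) =
      (lam ℓ (zpt c z ℓ))⁻¹ *
        ∏ s ∈ Finset.Icc (ℓ + 1) n, lam s (zpt c z ((s : ℂ) - 1)) / lam s (zpt c z s) :=
  statement10_general n c lam hne hconstraint ℓ hℓ z

end
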